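/- For two r-ary invariant relations R₁ and R₂ on a perfect binary tree T, R₁ = R₂ if and only if their characteristic relations are equal: R₁* = R₂*. -/

import Mathlib

/-
Tuples `a` and `b` with the same characteristic tuple are related by an automorphism: at every
node on the path to some `aᵢ`, swap its two children exactly when `aᵢ` and `bᵢ` leave that node
in different directions. This does not depend on `i`, because the lca depths say that `aᵢ, aⱼ`
share their first `k` letters exactly when `bᵢ, bⱼ` do. So an invariant relation contains every
tuple whose characteristic tuple is that of one of its members, and is determined by `R*`.
-/

/-- A perfect binary tree of depth `h` (levels `0,…,h-1`): nodes are binary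
strings of length `< h`. -/
def PBT (h : ℕ) : Type := {l : List Bool // l.length < h}

/-- Depth of a node: its distance from the root. -/
def depth {h : ℕ} (a : PBT h) : ℕ := a.1.length

/-- The edge (parent-child) relation of the perfect binary tree. -/
def edge {h : ℕ} (a b : PBT h) : Prop := ∃ x : Bool, b.1 = a.1 ++ [x]

/-- An automorphism of the perfect binary tree: an edge-preserving bijection. -/
structure Aut (h : ℕ) where
  toEquiv : PBT h ≃ PBT h
  edge_iff : ∀ a b : PBT h, edge a b ↔ edge (toEquiv a) (toEquiv b)

/-- An `r`-ary relation is invariant if `f[R] = R` for every automorphism `f`,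
where `f` acts componentwise on tuples. -/
def Invariant {h r : ℕ} (R : Set (Fin r → PBT h)) : Prop :=
  ∀ f : Aut h, (fun t : Fin r → PBT h => fun i => f.toEquiv (t i)) '' R = R

/-- Longest common prefix of two binary strings. -/
def lcp : List Bool → List Bool → List Bool
  | [], _ => []
  | _ :: _, [] => []
  | x :: xs, y :: ys => if x = y then x :: lcp xs ys else []

theorem lcp_length_le (l m : List Bool) : (lcp l m).length ≤ l.length := by
  induction l generalizing m with
  | nil => simp [lcp]
  | cons x xs ih =>
    cases m with
    | nil => simp [lcp]
    | cons y ys =>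
      by_cases hxy : x = y
      · simpa [lcp, hxy] using ih ys
      · simp [lcp, hxy]

/-- The least common ancestor of two nodes of the perfect binary tree. -/
def lca {h : ℕ} (a b : PBT h) : PBT h :=
  ⟨lcp a.1 b.1, lt_of_le_of_lt (lcp_length_le a.1 b.1) a.2⟩

/-- The characteristic tuple of a tuple of nodes: the depths of all components
and of all pairwise least common ancestors (the diagonal entry `(i,i)` is the
depth of the `i`-th component, since `aᵢ ⊼ aᵢ = aᵢ`). -/
def charTuple {h r : ℕ} (a : Fin r → PBT h) : Fin r → Fin r → ℕ :=
  fun i j => depth (lca (a i) (a j))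

theorem take_eq_take_iff_le_length_lcp {l m : List Bool} {k : ℕ} (hl : k ≤ l.length)
    (hm : k ≤ m.length) : l.take k = m.take k ↔ k ≤ (lcp l m).length := by
  induction l generalizing m k with
  | nil => simp_all
  | cons x xs ih =>
    cases m with
    | nil => simp_all
    | cons y ys =>
      cases k with
      | zero => simp
      | succ k =>
        simp only [List.length_cons, Nat.add_le_add_iff_right] at hl hm
        by_cases hxy : x = y <;> simp [lcp, hxy, ih hl hm]

theorem lcp_self (l : List Bool) : lcp l l = l := by
  induction l with
  | nil => rfl
  | cons x xs ih => simp [lcp, ih]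

theorem take_add_one_eq_append_getD {l : List Bool} {k : ℕ} (hk : k < l.length) :
    l.take (k + 1) = l.take k ++ [l.getD k false] := by
  rw [List.take_add_one, List.getD_eq_getElem?_getD, List.getElem?_eq_getElem hk]
  rfl

/-- `twist e p l` relabels the string `l`, read below the node `p`, by swapping the two
children of every node `q` with `e q = true`. -/
def twist (e : List Bool → Bool) : List Bool → List Bool → List Bool
  | _, [] => []
  | p, x :: xs => xor x (e p) :: twist e (p ++ [x]) xs

def untwist (e : List Bool → Bool) : List Bool → List Bool → List Bool
  | _, [] => []
  | p, y :: ys => xor y (e p) :: untwist e (p ++ [xor y (e p)]) ys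

section Twist

variable (e : List Bool → Bool)

theorem length_twist (p l : List Bool) : (twist e p l).length = l.length := by
  induction l generalizing p <;> simp [twist, *]

theorem length_untwist (p l : List Bool) : (untwist e p l).length = l.length := by
  induction l generalizing p <;> simp [untwist, *]

theorem untwist_twist (p l : List Bool) : untwist e p (twist e p l) = l := by
  induction l generalizing p <;> simp [twist, untwist, *]

theorem twist_untwist (p l : List Bool) : twist e p (untwist e p l) = l := by
  induction l generalizing p <;> simp [twist, untwist, *]

theorem twist_append_singleton (p l : List Bool) (x : Bool) :
    twist e p (l ++ [x]) = twist e p l ++ [xor x (e (p ++ l))] := by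
  induction l generalizing p <;> simp [twist, *]

theorem twist_eq_of_forall_getD {p l m : List Bool} (hlen : l.length = m.length)
    (he : ∀ k < l.length, e (p ++ l.take k) = xor (l.getD k false) (m.getD k false)) :
    twist e p l = m := by
  induction l generalizing p m with
  | nil => simpa [twist] using (List.length_eq_zero_iff.mp hlen.symm).symm
  | cons x xs ih =>
    obtain _ | ⟨y, ys⟩ := m
    · simp at hlen
    have hhead : e p = xor x y := by simpa using he 0 (by simp)
    have htail : twist e (p ++ [x]) xs = ys :=
      ih (by simpa using hlen) fun k hk => by simpa using he (k + 1) (by simpa using hk)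
    simp [twist, hhead, htail]

def twistAut (h : ℕ) : Aut h where
  toEquiv :=
    { toFun := fun a => ⟨twist e [] a.1, (length_twist e [] a.1).symm ▸ a.2⟩
      invFun := fun a => ⟨untwist e [] a.1, (length_untwist e [] a.1).symm ▸ a.2⟩
      left_inv := fun a => Subtype.ext (untwist_twist e [] a.1)
      right_inv := fun a => Subtype.ext (twist_untwist e [] a.1) }
  edge_iff a b := by
    constructor
    · rintro ⟨x, hx⟩
      refine ⟨xor x (e a.1), ?_⟩
      change twist e [] b.1 = twist e [] a.1 ++ _
      rw [hx, twist_append_singleton, List.nil_append]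
    · rintro ⟨y, hy⟩
      refine ⟨xor y (e a.1), ?_⟩
      change twist e [] b.1 = twist e [] a.1 ++ [y] at hy
      rw [← untwist_twist e [] b.1, hy, ← untwist_twist e [] (a.1 ++ _),
        twist_append_singleton, List.nil_append, Bool.xor_assoc, Bool.xor_self, Bool.xor_false]

end Twist

section CharTuple

variable {h r : ℕ} {a b : Fin r → PBT h}

theorem length_eq_of_charTuple_eq (hab : charTuple a = charTuple b) (i : Fin r) :
    (a i).1.length = (b i).1.length := by
  simpa [charTuple, depth, lca, lcp_self] using congrFun (congrFun hab i) i

theorem take_eq_take_iff_of_charTuple_eq (hab : charTuple a = charTuple b) {i j : Fin r} {k : ℕ}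
    (hi : k ≤ (a i).1.length) (hj : k ≤ (a j).1.length) :
    (a i).1.take k = (a j).1.take k ↔ (b i).1.take k = (b j).1.take k := by
  have hlcp : (lcp (a i).1 (a j).1).length = (lcp (b i).1 (b j).1).length :=
    congrFun (congrFun hab i) j
  rw [take_eq_take_iff_le_length_lcp hi hj, take_eq_take_iff_le_length_lcp
    (length_eq_of_charTuple_eq hab i ▸ hi) (length_eq_of_charTuple_eq hab j ▸ hj), hlcp]

theorem xor_getD_eq_of_charTuple_eq (hab : charTuple a = charTuple b) {i j : Fin r} {k : ℕ}
    (hi : k < (a i).1.length) (hj : k < (a j).1.length) (hij : (a i).1.take k = (a j).1.take k) :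
    xor ((a i).1.getD k false) ((b i).1.getD k false)
      = xor ((a j).1.getD k false) ((b j).1.getD k false) := by
  have hb : (b i).1.take k = (b j).1.take k :=
    (take_eq_take_iff_of_charTuple_eq hab hi.le hj.le).1 hij
  have hbit := take_eq_take_iff_of_charTuple_eq hab (k := k + 1) hi hj
  rw [take_add_one_eq_append_getD hi, take_add_one_eq_append_getD hj,
    take_add_one_eq_append_getD (length_eq_of_charTuple_eq hab i ▸ hi),
    take_add_one_eq_append_getD (length_eq_of_charTuple_eq hab j ▸ hj), hij, hb,
    List.append_cancel_left_eq, List.append_cancel_left_eq, List.singleton_inj,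
    List.singleton_inj] at hbit
  revert hbit
  cases (a i).1.getD k false <;> cases (a j).1.getD k false <;>
    cases (b i).1.getD k false <;> cases (b j).1.getD k false <;> decide

noncomputable def swapBits (a b : Fin r → PBT h) (p : List Bool) : Bool :=
  if hp : ∃ i, p.length < (a i).1.length ∧ (a i).1.take p.length = p then
    xor ((a hp.choose).1.getD p.length false) ((b hp.choose).1.getD p.length false)
  else false

theorem swapBits_take (hab : charTuple a = charTuple b) (i : Fin r) {k : ℕ}
    (hk : k < (a i).1.length) :
    swapBits a b ((a i).1.take k) = xor ((a i).1.getD k false) ((b i).1.getD k false) := by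
  have hlen : ((a i).1.take k).length = k := by simp only [List.length_take]; omega
  have hp : ∃ j, ((a i).1.take k).length < (a j).1.length
      ∧ (a j).1.take ((a i).1.take k).length = (a i).1.take k :=
    ⟨i, by rw [hlen]; exact hk, by rw [hlen]⟩
  rw [swapBits, dif_pos hp]
  obtain ⟨hj, hji⟩ := hp.choose_spec
  generalize hp.choose = j at hj hji ⊢
  rw [hlen] at hj hji ⊢
  exact xor_getD_eq_of_charTuple_eq hab hj hk hji

theorem exists_aut_of_charTuple_eq (hab : charTuple a = charTuple b) :
    ∃ f : Aut h, ∀ i, f.toEquiv (a i) = b i :=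
  ⟨twistAut (swapBits a b) h, fun i => Subtype.ext <|
    twist_eq_of_forall_getD _ (length_eq_of_charTuple_eq hab i) fun _ hk => by
      rw [List.nil_append, swapBits_take hab i hk]⟩

theorem Invariant.subset_of_image_charTuple_subset {R S : Set (Fin r → PBT h)}
    (hS : Invariant S) (hRS : charTuple '' R ⊆ charTuple '' S) : R ⊆ S := by
  intro t ht
  obtain ⟨s, hs, hst⟩ := hRS ⟨t, ht, rfl⟩
  obtain ⟨f, hf⟩ := exists_aut_of_charTuple_eq hst
  rw [← hS f]
  exact ⟨s, hs, funext hf⟩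

end CharTuple

/-- Two invariant relations are equal iff their characteristic relations
`R* = {(a₁,…,a_r)* | (a₁,…,a_r) ∈ R}` are equal. -/
theorem invariant_eq_iff_char_eq {h r : ℕ} (R₁ R₂ : Set (Fin r → PBT h))
    (h₁ : Invariant R₁) (h₂ : Invariant R₂) :
    R₁ = R₂ ↔ charTuple '' R₁ = charTuple '' R₂ :=
  ⟨fun hR => hR ▸ rfl, fun hc => (h₂.subset_of_image_charTuple_subset hc.le).antisymm
    (h₁.subset_of_image_charTuple_subset hc.ge)⟩
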